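/- arXiv:1906.06829 — 3 statements merged into one kernel-verified Lean document; each statement's English description precedes it below -/
import Mathlib

section
/- Let Q be the block matrix [Q₀ I] where Q₀ has blocks B_k^i (products of at most m−1 contractions) arranged block-diagonally as in the MGRIT ideal restriction. Then the operator norm of [Q₀ I] equals max_k √‖Σ_{i=0}^{m−1} B_k^i (B_k^i)^T‖ and is bounded above by max_k √(Σ_{i=0}^{m−1} ‖B_k^i‖²). -/
open scoped Matrix
/-- The product `B_k^i = Ψ_{km} Ψ_{km-1} ⋯ Ψ_{km-i+1}` (with `B_k^0 = I`). -/
noncomputable def Bprod4 {n : ℕ} (Ψ : ℕ → Matrix (Fin n) (Fin n) ℂ) (m k i : ℕ) :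
    Matrix (Fin n) (Fin n) ℂ :=
  ((List.range i).map (fun t => Ψ (k * m - t))).prod

/-- The block matrix `Q₀` of the MGRIT ideal restriction: block row `k+1` contains the blocks
`(B_{k+1}^{m-1}, …, B_{k+1}^1)` in its `k`-th group of block columns; the first block row is
zero. -/
noncomputable def Q₀mat {n : ℕ} (Ψ : ℕ → Matrix (Fin n) (Fin n) ℂ) (m Nc : ℕ) :
    Matrix (Fin (Nc + 1) × Fin n) ((Fin Nc × Fin (m - 1)) × Fin n) ℂ :=
  Matrix.of fun p q =>
    if (p.1 : ℕ) = (q.1.1 : ℕ) + 1 then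
      Bprod4 Ψ m ((q.1.1 : ℕ) + 1) (m - 1 - (q.1.2 : ℕ)) p.2 q.2
    else 0

open scoped Matrix.Norms.L2Operator

namespace StmtAux4

/-- block diagonal matrix with blocks `D k` -/
noncomputable def blk {N n : ℕ} (D : Fin N → Matrix (Fin n) (Fin n) ℂ) :
    Matrix (Fin N × Fin n) (Fin N × Fin n) ℂ :=
  Matrix.of fun p q => if p.1 = q.1 then D p.1 p.2 q.2 else 0


lemma sq_norm_eucl {ι : Type*} [Fintype ι] (v : EuclideanSpace ℂ ι) :
    ‖v‖ ^ 2 = ∑ i, ‖v i‖ ^ 2 := by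
  rw [EuclideanSpace.norm_eq, Real.sq_sqrt (by positivity)]

lemma eq_of_sq_eq {a b : ℝ} (ha : 0 ≤ a) (hb : 0 ≤ b) (h : a ^ 2 = b ^ 2) : a = b := by
  nlinarith

lemma le_of_sq_le {a b : ℝ} (ha : 0 ≤ a) (hb : 0 ≤ b) (h : a ^ 2 ≤ b ^ 2) : a ≤ b := by
  nlinarith

lemma blk_mulVec {N n : ℕ} (D : Fin N → Matrix (Fin n) (Fin n) ℂ)
    (x : Fin N × Fin n → ℂ) (p : Fin N × Fin n) :
    (blk D *ᵥ x) p = (D p.1 *ᵥ fun b => x (p.1, b)) p.2 := by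
  simp only [Matrix.mulVec, dotProduct, blk, Matrix.of_apply, Fintype.sum_prod_type,
    ite_mul, zero_mul]
  rw [Finset.sum_comm]
  simp

lemma norm_blk {N n : ℕ} [NeZero N] (D : Fin N → Matrix (Fin n) (Fin n) ℂ) :
    ‖blk D‖ = ⨆ k, ‖D k‖ := by
  have hbdd : BddAbove (Set.range fun k => ‖D k‖) := (Set.finite_range _).bddAbove
  have hle : ∀ k, ‖D k‖ ≤ ⨆ k, ‖D k‖ := fun k => le_ciSup hbdd k
  have hC0 : (0:ℝ) ≤ ⨆ k, ‖D k‖ :=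
    le_trans (norm_nonneg (D 0)) (hle 0)
  apply le_antisymm
  · rw [Matrix.l2_opNorm_def]
    apply ContinuousLinearMap.opNorm_le_bound _ hC0
    intro x
    refine le_of_sq_le (norm_nonneg _) (by positivity) ?_
    have hx : ‖x‖ ^ 2 = ∑ k, ‖((WithLp.equiv 2 _).symm (fun b => x (k, b)) :
        EuclideanSpace ℂ (Fin n))‖ ^ 2 := by
      rw [sq_norm_eucl, Fintype.sum_prod_type]
      refine Finset.sum_congr rfl fun k _ => ?_
      rw [sq_norm_eucl]; rfl
    calc ‖(Matrix.toEuclideanLin.trans LinearMap.toContinuousLinearMap) (blk D) x‖ ^ 2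
        = ∑ k, ∑ a, ‖(D k *ᵥ fun b => x (k, b)) a‖ ^ 2 := by
          rw [sq_norm_eucl, Fintype.sum_prod_type]
          refine Finset.sum_congr rfl fun k _ => Finset.sum_congr rfl fun a _ => ?_
          congr 1
          exact congrArg norm (blk_mulVec D x (k, a))
      _ = ∑ k, ‖((WithLp.equiv 2 _).symm (D k *ᵥ fun b => x (k, b)) :
            EuclideanSpace ℂ (Fin n))‖ ^ 2 := by
          refine Finset.sum_congr rfl fun k _ => ?_
          rw [sq_norm_eucl]; rfl
      _ ≤ ∑ k, ((⨆ k, ‖D k‖) * ‖((WithLp.equiv 2 _).symm (fun b => x (k, b)) :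
            EuclideanSpace ℂ (Fin n))‖) ^ 2 := by
          refine Finset.sum_le_sum fun k _ => ?_
          have h1 := Matrix.l2_opNorm_mulVec (D k)
            ((WithLp.equiv 2 _).symm (fun b => x (k, b)))
          refine pow_le_pow_left₀ (norm_nonneg _) (le_trans h1 ?_) 2
          exact mul_le_mul_of_nonneg_right (hle k) (norm_nonneg _)
      _ = (⨆ k, ‖D k‖) ^ 2 * ∑ k, ‖((WithLp.equiv 2 _).symm (fun b => x (k, b)) :
            EuclideanSpace ℂ (Fin n))‖ ^ 2 := by
          rw [Finset.mul_sum]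
          exact Finset.sum_congr rfl fun k _ => by ring
      _ = ((⨆ k, ‖D k‖) * ‖x‖) ^ 2 := by rw [mul_pow, hx]
  · refine ciSup_le fun k => ?_
    rw [Matrix.l2_opNorm_def]
    apply ContinuousLinearMap.opNorm_le_bound _ (norm_nonneg _)
    intro y
    set x : EuclideanSpace ℂ (Fin N × Fin n) :=
      (WithLp.equiv 2 _).symm (fun p => if p.1 = k then y p.2 else 0) with hxdef
    have hxval : ∀ p : Fin N × Fin n, x p = if p.1 = k then y p.2 else 0 := fun _ => rfl
    have hxy : ‖x‖ = ‖y‖ := by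
      refine eq_of_sq_eq (norm_nonneg _) (norm_nonneg _) ?_
      rw [sq_norm_eucl, sq_norm_eucl, Fintype.sum_prod_type, Finset.sum_comm]
      refine Finset.sum_congr rfl fun b _ => ?_
      have h : ∀ l : Fin N, ‖x (l, b)‖ ^ 2 = if l = k then ‖y b‖ ^ 2 else 0 := by
        intro l; by_cases hl : l = k <;> simp [hxval, hl]
      simp only [h, Finset.sum_ite_eq', Finset.mem_univ, if_true]
    have hfx : ‖(Matrix.toEuclideanLin.trans LinearMap.toContinuousLinearMap) (D k) y‖
        = ‖(Matrix.toEuclideanLin.trans LinearMap.toContinuousLinearMap) (blk D) x‖ := by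
      refine eq_of_sq_eq (norm_nonneg _) (norm_nonneg _) ?_
      rw [sq_norm_eucl, sq_norm_eucl, Fintype.sum_prod_type, Finset.sum_comm]
      have h : ∀ (l : Fin N) (a : Fin n),
          ‖((Matrix.toEuclideanLin.trans LinearMap.toContinuousLinearMap) (blk D) x) (l, a)‖ ^ 2
          = if l = k then ‖(D k *ᵥ y) a‖ ^ 2 else 0 := by
        intro l a
        have h1 : ((Matrix.toEuclideanLin.trans LinearMap.toContinuousLinearMap) (blk D) x) (l, a)
            = (D l *ᵥ fun b => x (l, b)) a := blk_mulVec D x (l, a)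
        rw [h1]
        by_cases hl : l = k
        · subst hl; simp [hxval]
        · simp [hxval, hl, Matrix.mulVec, dotProduct]
      simp only [h, Finset.sum_ite_eq', Finset.mem_univ, if_true]
      exact Finset.sum_congr rfl fun a _ => rfl
    calc ‖(Matrix.toEuclideanLin.trans LinearMap.toContinuousLinearMap) (D k) y‖
        = ‖(Matrix.toEuclideanLin.trans LinearMap.toContinuousLinearMap) (blk D) x‖ := hfx
      _ ≤ ‖(Matrix.toEuclideanLin.trans LinearMap.toContinuousLinearMap) (blk D)‖ * ‖x‖ :=
          ContinuousLinearMap.le_opNorm _ _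
      _ = ‖blk D‖ * ‖y‖ := by rw [hxy]; rfl

noncomputable def Smat {n : ℕ} (Ψ : ℕ → Matrix (Fin n) (Fin n) ℂ) (m j : ℕ) :
    Matrix (Fin n) (Fin n) ℂ :=
  ∑ i ∈ Finset.range m, Bprod4 Ψ m (j + 1) i * (Bprod4 Ψ m (j + 1) i)ᴴ

noncomputable def Dfam {n : ℕ} (Ψ : ℕ → Matrix (Fin n) (Fin n) ℂ) (m Nc : ℕ) :
    Fin (Nc + 1) → Matrix (Fin n) (Fin n) ℂ :=
  Fin.cases 1 (fun j : Fin Nc => Smat Ψ m (j : ℕ))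

lemma Bprod4_zero {n : ℕ} (Ψ : ℕ → Matrix (Fin n) (Fin n) ℂ) (m k : ℕ) :
    Bprod4 Ψ m k 0 = 1 := by simp [Bprod4]

lemma QQH {n : ℕ} (Ψ : ℕ → Matrix (Fin n) (Fin n) ℂ) (m Nc : ℕ) (hm : 2 ≤ m) :
    Matrix.fromCols (Q₀mat Ψ m Nc)
        (1 : Matrix (Fin (Nc + 1) × Fin n) (Fin (Nc + 1) × Fin n) ℂ) *
      (Matrix.fromCols (Q₀mat Ψ m Nc)
        (1 : Matrix (Fin (Nc + 1) × Fin n) (Fin (Nc + 1) × Fin n) ℂ))ᴴ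
      = blk (Dfam Ψ m Nc) := by
  obtain ⟨m', rfl⟩ : ∃ m', m = m' + 1 := ⟨m - 1, by omega⟩
  rw [Matrix.conjTranspose_fromCols_eq_fromRows_conjTranspose,
    Matrix.fromCols_mul_fromRows, Matrix.conjTranspose_one, mul_one]
  ext ⟨k, a⟩ ⟨l, b⟩
  rw [Matrix.add_apply]
  by_cases hkl : k = l
  · subst hkl
    induction k using Fin.cases with
    | zero =>
      have hz : (Q₀mat Ψ (m' + 1) Nc * (Q₀mat Ψ (m' + 1) Nc)ᴴ) (0, a) (0, b) = 0 := by
        rw [Matrix.mul_apply]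
        refine Finset.sum_eq_zero fun q _ => ?_
        have h0 : Q₀mat Ψ (m' + 1) Nc (0, a) q = 0 := by simp [Q₀mat]
        rw [h0, zero_mul]
      rw [hz, zero_add]
      simp [blk, Dfam, Matrix.one_apply, Prod.ext_iff]
    | succ j =>
      have key : ∀ (X Y : Matrix (Fin n) (Fin n) ℂ) (a b : Fin n),
          ∑ c, X a c * star (Y b c) = (X * Yᴴ) a b := by
        intro X Y a b
        simp [Matrix.mul_apply, Matrix.conjTranspose_apply]
      have hmul : (Q₀mat Ψ (m' + 1) Nc * (Q₀mat Ψ (m' + 1) Nc)ᴴ) (j.succ, a) (j.succ, b)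
          = ∑ t : Fin m', (Bprod4 Ψ (m' + 1) ((j : ℕ) + 1) (m' - (t : ℕ)) *
              (Bprod4 Ψ (m' + 1) ((j : ℕ) + 1) (m' - (t : ℕ)))ᴴ) a b := by
        rw [Matrix.mul_apply, Fintype.sum_prod_type, Fintype.sum_prod_type]
        rw [Finset.sum_eq_single j
          (fun q _ hq => ?_) (fun hj => absurd (Finset.mem_univ j) hj)]
        · refine Finset.sum_congr rfl fun t _ => ?_
          have hcond : ((j.succ : Fin (Nc + 1)) : ℕ) = (j : ℕ) + 1 := Fin.val_succ j
          simp only [Q₀mat, Matrix.conjTranspose_apply, Matrix.of_apply, hcond, if_pos rfl,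
            Nat.add_sub_cancel]
          exact key _ _ a b
        · refine Finset.sum_eq_zero fun t _ => Finset.sum_eq_zero fun c _ => ?_
          have hcond : ¬ ((j.succ : Fin (Nc + 1)) : ℕ) = (q : ℕ) + 1 := by
            rw [Fin.val_succ]
            intro h
            exact hq (Fin.ext (by omega))
          simp only [Q₀mat, Matrix.of_apply]
          rw [if_neg hcond, zero_mul]
      rw [hmul]
      have hblk : blk (Dfam Ψ (m' + 1) Nc) (j.succ, a) (j.succ, b)
          = ∑ i ∈ Finset.range (m' + 1),
            (Bprod4 Ψ (m' + 1) ((j : ℕ) + 1) i * (Bprod4 Ψ (m' + 1) ((j : ℕ) + 1) i)ᴴ) a b := by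
        simp [blk, Dfam, Smat, Matrix.sum_apply]
      rw [hblk, Finset.sum_range_succ']
      have hone : (1 : Matrix (Fin (Nc + 1) × Fin n) (Fin (Nc + 1) × Fin n) ℂ)
          (j.succ, a) (j.succ, b)
          = (Bprod4 Ψ (m' + 1) ((j : ℕ) + 1) 0 * (Bprod4 Ψ (m' + 1) ((j : ℕ) + 1) 0)ᴴ) a b := by
        simp [Bprod4_zero, Matrix.one_apply, Prod.ext_iff]
      rw [hone]
      congr 1
      rw [Fin.sum_univ_eq_sum_range (fun i =>
        (Bprod4 Ψ (m' + 1) ((j : ℕ) + 1) (m' - i) *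
          (Bprod4 Ψ (m' + 1) ((j : ℕ) + 1) (m' - i))ᴴ) a b) m']
      conv_rhs => rw [← Finset.sum_range_reflect]
      refine Finset.sum_congr rfl fun t ht => ?_
      rw [Finset.mem_range] at ht
      have : m' - (t : ℕ) = m' - 1 - t + 1 := by omega
      rw [this]
  · have hz : (Q₀mat Ψ (m' + 1) Nc * (Q₀mat Ψ (m' + 1) Nc)ᴴ) (k, a) (l, b) = 0 := by
      rw [Matrix.mul_apply]
      refine Finset.sum_eq_zero fun q _ => ?_
      rcases q with ⟨⟨q, t⟩, c⟩
      by_cases h1 : (k : ℕ) = (q : ℕ) + 1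
      · by_cases h2 : (l : ℕ) = (q : ℕ) + 1
        · exact absurd (Fin.ext (h1.trans h2.symm)) hkl
        · simp [Q₀mat, Matrix.conjTranspose_apply, h2]
      · simp [Q₀mat, h1]
    rw [hz, zero_add]
    simp [blk, Matrix.one_apply, Prod.ext_iff, hkl]


open scoped InnerProductSpace

set_option maxHeartbeats 1000000 in
lemma norm_one_le_norm_Smat {n : ℕ} (Ψ : ℕ → Matrix (Fin n) (Fin n) ℂ) (m j : ℕ) (hm : 2 ≤ m) :
    ‖(1 : Matrix (Fin n) (Fin n) ℂ)‖ ≤ ‖Smat Ψ m j‖ := by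
  rcases Nat.eq_zero_or_pos n with hn | hn
  · subst hn
    have h1 : (1 : Matrix (Fin 0) (Fin 0) ℂ) = 0 := by ext i; exact i.elim0
    rw [h1, norm_zero]
    exact norm_nonneg _
  · haveI : Nonempty (Fin n) := ⟨⟨0, hn⟩⟩
    haveI : Nontrivial (EuclideanSpace ℂ (Fin n)) := by
      refine ⟨⟨EuclideanSpace.single (⟨0, hn⟩ : Fin n) (1 : ℂ), 0, fun h => ?_⟩⟩
      have := congrFun (congrArg (fun v : EuclideanSpace ℂ (Fin n) => (v : Fin n → ℂ)) h)
        (⟨0, hn⟩ : Fin n)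
      simp at this
    have hone : ‖(1 : Matrix (Fin n) (Fin n) ℂ)‖ = 1 := by
      rw [Matrix.cstar_norm_def, map_one, ContinuousLinearMap.one_def,
        ContinuousLinearMap.norm_id]
    set x : EuclideanSpace ℂ (Fin n) := EuclideanSpace.single (⟨0, hn⟩ : Fin n) (1 : ℂ)
      with hxdef
    have hx : ‖x‖ = 1 := by rw [hxdef, EuclideanSpace.norm_single]; exact norm_one
    set T := Matrix.toEuclideanCLM (𝕜 := ℂ) (Smat Ψ m j) with hTdef
    have hinner : (⟪x, T x⟫_ℂ)
        = ((∑ i ∈ Finset.range m,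
            ‖Matrix.toEuclideanCLM (𝕜 := ℂ) ((Bprod4 Ψ m (j + 1) i)ᴴ) x‖ ^ 2 : ℝ) : ℂ) := by
      rw [hTdef, Smat, map_sum, ContinuousLinearMap.sum_apply, inner_sum]
      push_cast
      refine Finset.sum_congr rfl fun i _ => ?_
      rw [map_mul]
      have h1 : Matrix.toEuclideanCLM (𝕜 := ℂ) (Bprod4 Ψ m (j + 1) i)
          = ContinuousLinearMap.adjoint
            (Matrix.toEuclideanCLM (𝕜 := ℂ) ((Bprod4 Ψ m (j + 1) i)ᴴ)) := by
        rw [← ContinuousLinearMap.star_eq_adjoint, ← map_star]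
        congr 1
        rw [Matrix.star_eq_conjTranspose, Matrix.conjTranspose_conjTranspose]
      rw [ContinuousLinearMap.mul_apply, h1, ContinuousLinearMap.adjoint_inner_right,
        inner_self_eq_norm_sq_to_K]
      norm_cast
    have hsum_ge : (1 : ℝ) ≤ ∑ i ∈ Finset.range m,
        ‖Matrix.toEuclideanCLM (𝕜 := ℂ) ((Bprod4 Ψ m (j + 1) i)ᴴ) x‖ ^ 2 := by
      have h0 : ‖Matrix.toEuclideanCLM (𝕜 := ℂ) ((Bprod4 Ψ m (j + 1) 0)ᴴ) x‖ ^ 2 = 1 := by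
        rw [Bprod4_zero, Matrix.conjTranspose_one, map_one]
        simp [hx]
      refine le_trans (le_of_eq h0.symm) ?_
      exact Finset.single_le_sum
        (f := fun i => ‖Matrix.toEuclideanCLM (𝕜 := ℂ) ((Bprod4 Ψ m (j + 1) i)ᴴ) x‖ ^ 2)
        (fun i _ => sq_nonneg _) (Finset.mem_range.mpr (by omega))
    have h2 : ‖(⟪x, T x⟫_ℂ)‖ ≤ ‖T‖ := by
      calc ‖(⟪x, T x⟫_ℂ)‖ ≤ ‖x‖ * ‖T x‖ := norm_inner_le_norm (𝕜 := ℂ) x (T x)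
        _ ≤ ‖x‖ * (‖T‖ * ‖x‖) :=
            mul_le_mul_of_nonneg_left (T.le_opNorm x) (norm_nonneg x)
        _ = ‖T‖ := by rw [hx]; ring
    have h3 : (1 : ℝ) ≤ ‖(⟪x, T x⟫_ℂ)‖ := by
      have hnn : (0 : ℝ) ≤ ∑ i ∈ Finset.range m,
          ‖Matrix.toEuclideanCLM (𝕜 := ℂ) ((Bprod4 Ψ m (j + 1) i)ᴴ) x‖ ^ 2 :=
        Finset.sum_nonneg fun i _ => sq_nonneg _
      rw [hinner, Complex.norm_real, Real.norm_eq_abs, abs_of_nonneg hnn]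
      exact hsum_ge
    rw [hone, Matrix.cstar_norm_def]
    exact le_trans h3 h2

lemma key_norm_eq {n : ℕ} (m Nc : ℕ) (hm : 2 ≤ m) (hNc : 1 ≤ Nc)
    (Ψ : ℕ → Matrix (Fin n) (Fin n) ℂ) :
    ‖LinearMap.toContinuousLinearMap (Matrix.toEuclideanLin
        (Matrix.fromCols (Q₀mat Ψ m Nc)
          (1 : Matrix (Fin (Nc + 1) × Fin n) (Fin (Nc + 1) × Fin n) ℂ)))‖ =
      ⨆ k : Fin Nc, Real.sqrt ‖Smat Ψ m (k : ℕ)‖ := by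
  haveI : Nonempty (Fin Nc) := ⟨⟨0, hNc⟩⟩
  set Q := Matrix.fromCols (Q₀mat Ψ m Nc)
    (1 : Matrix (Fin (Nc + 1) × Fin n) (Fin (Nc + 1) × Fin n) ℂ) with hQdef
  have h0 : ‖LinearMap.toContinuousLinearMap (Matrix.toEuclideanLin Q)‖ = ‖Q‖ :=
    (Matrix.l2_opNorm_def Q).symm
  rw [h0]
  have h1 : ‖Q * Qᴴ‖ = ‖Q‖ * ‖Q‖ := by
    have := Matrix.l2_opNorm_conjTranspose_mul_self Qᴴ
    rwa [Matrix.conjTranspose_conjTranspose, Matrix.l2_opNorm_conjTranspose] at this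
  have h2 : ‖Q‖ = Real.sqrt ‖blk (Dfam Ψ m Nc)‖ := by
    rw [← QQH Ψ m Nc hm, h1, Real.sqrt_mul_self (norm_nonneg Q)]
  rw [h2, norm_blk]
  have h3 : Real.sqrt (⨆ k', ‖Dfam Ψ m Nc k'‖) = ⨆ k', Real.sqrt ‖Dfam Ψ m Nc k'‖ :=
    Monotone.map_ciSup_of_continuousAt Real.continuous_sqrt.continuousAt
      (fun a b h => Real.sqrt_le_sqrt h) ((Set.finite_range _).bddAbove)
  rw [h3]
  apply le_antisymm
  · refine ciSup_le fun k' => ?_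
    induction k' using Fin.cases with
    | zero =>
      refine le_trans ?_ (le_ciSup (f := fun k : Fin Nc => Real.sqrt ‖Smat Ψ m (k : ℕ)‖) ((Set.finite_range _).bddAbove) (⟨0, hNc⟩ : Fin Nc))
      apply Real.sqrt_le_sqrt
      have hD0 : Dfam Ψ m Nc 0 = 1 := rfl
      rw [hD0]
      exact norm_one_le_norm_Smat Ψ m _ hm
    | succ j =>
      have hDs : Dfam Ψ m Nc j.succ = Smat Ψ m (j : ℕ) := by
        simp [Dfam]
      rw [hDs]
      exact le_ciSup (f := fun k : Fin Nc => Real.sqrt ‖Smat Ψ m (k : ℕ)‖)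
        ((Set.finite_range _).bddAbove) j
  · refine ciSup_le fun k => ?_
    have hDs : Smat Ψ m (k : ℕ) = Dfam Ψ m Nc k.succ := by
      simp [Dfam]
    rw [hDs]
    exact le_ciSup (f := fun k' : Fin (Nc + 1) => Real.sqrt ‖Dfam Ψ m Nc k'‖)
      ((Set.finite_range _).bddAbove) k.succ

end StmtAux4

open StmtAux4 in
/-- The operator norm of the horizontal concatenation `[Q₀ I]` equals
`max_k √‖Σ_{i=0}^{m-1} B_k^i (B_k^i)ᴴ‖` and is bounded above by
`max_k √(Σ_{i=0}^{m-1} ‖B_k^i‖²)`. -/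
theorem stmt4 {n : ℕ} (m Nc : ℕ) (hm : 2 ≤ m) (hNc : 1 ≤ Nc)
    (Ψ : ℕ → Matrix (Fin n) (Fin n) ℂ) :
    ‖LinearMap.toContinuousLinearMap (Matrix.toEuclideanLin
        (Matrix.fromCols (Q₀mat Ψ m Nc)
          (1 : Matrix (Fin (Nc + 1) × Fin n) (Fin (Nc + 1) × Fin n) ℂ)))‖ =
      (⨆ k : Fin Nc, Real.sqrt ‖Matrix.toEuclideanCLM (𝕜 := ℂ)
        (∑ i ∈ Finset.range m,
          Bprod4 Ψ m ((k : ℕ) + 1) i * (Bprod4 Ψ m ((k : ℕ) + 1) i)ᴴ)‖) ∧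
    ‖LinearMap.toContinuousLinearMap (Matrix.toEuclideanLin
        (Matrix.fromCols (Q₀mat Ψ m Nc)
          (1 : Matrix (Fin (Nc + 1) × Fin n) (Fin (Nc + 1) × Fin n) ℂ)))‖ ≤
      ⨆ k : Fin Nc, Real.sqrt (∑ i ∈ Finset.range m,
        ‖Matrix.toEuclideanCLM (𝕜 := ℂ) (Bprod4 Ψ m ((k : ℕ) + 1) i)‖ ^ 2) := by
  haveI : Nonempty (Fin Nc) := ⟨⟨0, hNc⟩⟩
  have hCLM : ∀ (X : Matrix (Fin n) (Fin n) ℂ),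
      ‖Matrix.toEuclideanCLM (𝕜 := ℂ) X‖ = ‖X‖ := fun X => (Matrix.cstar_norm_def X).symm
  have key := key_norm_eq m Nc hm hNc Ψ
  constructor
  · rw [key]
    refine iSup_congr fun k => ?_
    rw [hCLM]
    rfl
  · rw [key]
    refine ciSup_mono ((Set.finite_range _).bddAbove) fun k => ?_
    apply Real.sqrt_le_sqrt
    calc ‖Smat Ψ m (k : ℕ)‖
        ≤ ∑ i ∈ Finset.range m,
            ‖Bprod4 Ψ m ((k : ℕ) + 1) i * (Bprod4 Ψ m ((k : ℕ) + 1) i)ᴴ‖ :=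
          norm_sum_le _ _
      _ = ∑ i ∈ Finset.range m,
            ‖Matrix.toEuclideanCLM (𝕜 := ℂ) (Bprod4 Ψ m ((k : ℕ) + 1) i)‖ ^ 2 := by
          refine Finset.sum_congr rfl fun i _ => ?_
          rw [hCLM]
          have := Matrix.l2_opNorm_conjTranspose_mul_self (Bprod4 Ψ m ((k : ℕ) + 1) i)ᴴ
          rw [Matrix.conjTranspose_conjTranspose, Matrix.l2_opNorm_conjTranspose] at this
          rw [this, sq]
end

section
/- Let A_Δ and S_Δ be block unit lower bidiagonal matrices with identity diagonal blocks and subdiagonal blocks −C_k and −Φ_k respectively (k = 1,…,N_c). Then (I − A_Δ S_Δ^{-1}) is strictly block lower triangular with (i+1, j) block equal to (C_{i+1} − Φ_{i+1})·(Φ_i Φ_{i−1} ⋯ Φ_{j+1}) for i ≥ j (the trailing product being the identity when i = j). -/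
/-- The descending product `Φ_a Φ_{a-1} ⋯ Φ_{b+1}` (the identity when `a = b`). -/
noncomputable def prodDesc6 {n : ℕ} (Φ : ℕ → Matrix (Fin n) (Fin n) ℂ) (a b : ℕ) :
    Matrix (Fin n) (Fin n) ℂ :=
  ((List.range (a - b)).map (fun t => Φ (a - t))).prod

/-- The block unit lower bidiagonal matrix with identity diagonal blocks and subdiagonal
blocks `-M_k` at positions `(k, k-1)`, `k = 1,…,Nc`. -/
noncomputable def bidiag6 {n : ℕ} (Nc : ℕ) (M : ℕ → Matrix (Fin n) (Fin n) ℂ) :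
    Matrix (Fin (Nc + 1)) (Fin (Nc + 1)) (Matrix (Fin n) (Fin n) ℂ) :=
  Matrix.of fun i j =>
    if i = j then 1 else if (i : ℕ) = (j : ℕ) + 1 then -M (i : ℕ) else 0

lemma prodDesc6_self {n : ℕ} (Φ : ℕ → Matrix (Fin n) (Fin n) ℂ) (a : ℕ) :
    prodDesc6 Φ a a = 1 := by
  simp [prodDesc6]

lemma prodDesc6_succ {n : ℕ} (Φ : ℕ → Matrix (Fin n) (Fin n) ℂ) {a b : ℕ} (h : b < a) :
    prodDesc6 Φ a b = Φ a * prodDesc6 Φ (a - 1) b := by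
  unfold prodDesc6
  obtain ⟨m, hm⟩ : ∃ m, a - b = m + 1 := ⟨a - b - 1, by omega⟩
  have hm' : a - 1 - b = m := by omega
  have hlist : (List.range (m + 1)).map (fun t => Φ (a - t)) =
      Φ a :: (List.range m).map (fun t => Φ (a - 1 - t)) := by
    rw [List.range_succ_eq_map, List.map_cons, List.map_map]
    refine congrArg₂ _ (by simp) ?_
    apply List.map_congr_left
    intro t _
    show Φ (a - (t + 1)) = Φ (a - 1 - t)
    rw [show a - (t + 1) = a - 1 - t from by omega]
  rw [hm, hm', hlist, List.prod_cons]

lemma bidiag6_mul_apply {n Nc : ℕ} (M : ℕ → Matrix (Fin n) (Fin n) ℂ)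
    (X : Matrix (Fin (Nc + 1)) (Fin (Nc + 1)) (Matrix (Fin n) (Fin n) ℂ)) (i j : Fin (Nc + 1)) :
    (bidiag6 Nc M * X) i j = X i j -
      (if h : 0 < (i : ℕ) then
        M (i : ℕ) * X ⟨(i : ℕ) - 1, Nat.lt_of_le_of_lt (Nat.sub_le _ _) i.2⟩ j else 0) := by
  rw [Matrix.mul_apply]
  have key : ∀ k : Fin (Nc + 1), bidiag6 Nc M i k =
      (if k = i then 1 else 0) + (if (i : ℕ) = (k : ℕ) + 1 then -M (i : ℕ) else 0) := by
    intro k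
    simp only [bidiag6, Matrix.of_apply]
    by_cases h1 : i = k
    · subst h1; simp
    · rw [if_neg h1, if_neg (Ne.symm h1), zero_add]
  simp_rw [key, add_mul, Finset.sum_add_distrib, ite_mul, one_mul, zero_mul]
  rw [Finset.sum_ite_eq' Finset.univ i (fun k => X k j), if_pos (Finset.mem_univ i)]
  by_cases hi : 0 < (i : ℕ)
  · rw [dif_pos hi]
    have i1 : (i : ℕ) - 1 < Nc + 1 := Nat.lt_of_le_of_lt (Nat.sub_le _ _) i.2
    have hrw : ∀ k : Fin (Nc + 1),
        (if (i : ℕ) = (k : ℕ) + 1 then -M (i : ℕ) * X k j else 0) =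
        (if k = (⟨(i : ℕ) - 1, i1⟩ : Fin (Nc + 1)) then (-M (i : ℕ)) * X k j else 0) := by
      intro k
      by_cases h : (i : ℕ) = (k : ℕ) + 1
      · rw [if_pos h, if_pos (Fin.ext (show (k : ℕ) = (i : ℕ) - 1 by omega)), neg_mul]
      · rw [if_neg h, if_neg (fun hh => h (by rw [hh]; show (i:ℕ) = (i:ℕ) - 1 + 1; omega))]
    rw [Finset.sum_congr rfl (fun k _ => hrw k),
      Finset.sum_ite_eq' Finset.univ (⟨(i : ℕ) - 1, i1⟩ : Fin (Nc + 1))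
        (fun k => (-M (i : ℕ)) * X k j),
      if_pos (Finset.mem_univ _), neg_mul, ← sub_eq_add_neg]
  · rw [dif_neg hi, sub_zero]
    have hz : ∀ k : Fin (Nc + 1),
        (if (i : ℕ) = (k : ℕ) + 1 then -M (i : ℕ) * X k j else 0) = 0 := by
      intro k
      rw [if_neg (by omega)]
    rw [Finset.sum_congr rfl (fun k _ => hz k), Finset.sum_const_zero, add_zero]

/-- The explicit inverse of `bidiag6 Nc Φ`. -/
noncomputable def Linv6 {n : ℕ} (Nc : ℕ) (Φ : ℕ → Matrix (Fin n) (Fin n) ℂ) :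
    Matrix (Fin (Nc + 1)) (Fin (Nc + 1)) (Matrix (Fin n) (Fin n) ℂ) :=
  Matrix.of fun i j => if (j : ℕ) ≤ (i : ℕ) then prodDesc6 Φ (i : ℕ) (j : ℕ) else 0

lemma bidiag6_mul_Linv6 {n Nc : ℕ} (Φ : ℕ → Matrix (Fin n) (Fin n) ℂ) :
    bidiag6 Nc Φ * Linv6 Nc Φ = 1 := by
  rw [← Matrix.ext_iff]
  intro i j
  rw [bidiag6_mul_apply]
  simp only [Linv6, Matrix.of_apply, Fin.val_mk]
  by_cases hi : 0 < (i : ℕ)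
  · rw [dif_pos hi]
    by_cases hji : (j : ℕ) ≤ (i : ℕ) - 1
    · rw [if_pos (show (j : ℕ) ≤ (i : ℕ) by omega)]
      rw [if_pos hji]
      rw [prodDesc6_succ Φ (show (j : ℕ) < (i : ℕ) by omega)]
      simp only [sub_self]
      exact (Matrix.one_apply_ne (show i ≠ j by intro h; rw [h] at hji; omega)).symm
    · rw [if_neg hji, mul_zero, sub_zero]
      by_cases hj : (j : ℕ) = (i : ℕ)
      · have hij : i = j := Fin.ext hj.symm
        rw [if_pos (le_of_eq hj), hj, prodDesc6_self, hij, Matrix.one_apply_eq]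
      · rw [if_neg (by omega),
          Matrix.one_apply_ne (show i ≠ j by intro h; rw [h] at hj; omega)]
  · rw [dif_neg hi, sub_zero]
    by_cases hj : (j : ℕ) ≤ (i : ℕ)
    · have hij : i = j := Fin.ext (by omega)
      subst hij
      rw [if_pos le_rfl, prodDesc6_self, Matrix.one_apply_eq]
    · rw [if_neg hj, Matrix.one_apply_ne (show i ≠ j by intro h; rw [h] at hj; omega)]

/-- If `L` is the inverse of `S_Δ` (the bidiagonal matrix built from the `Φ_k`) and `A_Δ` is
the bidiagonal matrix built from the `C_k`, then `I - A_Δ S_Δ⁻¹` is strictly block lower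
triangular whose `(i, j)` block for `j < i` equals `(C_i - Φ_i)·(Φ_{i-1} ⋯ Φ_{j+1})`. -/
theorem stmt6 {n Nc : ℕ} (C Φ : ℕ → Matrix (Fin n) (Fin n) ℂ)
    (L : Matrix (Fin (Nc + 1)) (Fin (Nc + 1)) (Matrix (Fin n) (Fin n) ℂ))
    (hL₁ : bidiag6 Nc Φ * L = 1) (hL₂ : L * bidiag6 Nc Φ = 1) :
    ∀ i j : Fin (Nc + 1),
      (1 - bidiag6 Nc C * L) i j =
        if (j : ℕ) < (i : ℕ) then
          (C (i : ℕ) - Φ (i : ℕ)) * prodDesc6 Φ ((i : ℕ) - 1) (j : ℕ)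
        else 0 := by
  have hL : L = Linv6 Nc Φ := by
    calc L = L * (bidiag6 Nc Φ * Linv6 Nc Φ) := by rw [bidiag6_mul_Linv6, mul_one]
    _ = (L * bidiag6 Nc Φ) * Linv6 Nc Φ := by rw [mul_assoc]
    _ = Linv6 Nc Φ := by rw [hL₂, one_mul]
  subst hL
  intro i j
  rw [Matrix.sub_apply, bidiag6_mul_apply]
  simp only [Linv6, Matrix.of_apply, Fin.val_mk]
  by_cases hji : (j : ℕ) < (i : ℕ)
  · rw [if_pos hji, dif_pos (show 0 < (i : ℕ) by omega), if_pos (le_of_lt hji),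
      if_pos (show (j : ℕ) ≤ (i : ℕ) - 1 by omega), prodDesc6_succ Φ hji,
      Matrix.one_apply_ne (show i ≠ j by intro h; rw [h] at hji; omega), sub_mul]
    abel
  · rw [if_neg hji]
    by_cases hj : (j : ℕ) = (i : ℕ)
    · have hij : j = i := Fin.ext hj
      subst hij
      rw [if_pos le_rfl, prodDesc6_self, Matrix.one_apply_eq]
      by_cases hi : 0 < (j : ℕ)
      · rw [dif_pos hi, if_neg (show ¬ (j : ℕ) ≤ (j : ℕ) - 1 by omega), mul_zero, sub_zero,
          sub_self]
      · rw [dif_neg hi, sub_zero, sub_self]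
    · rw [if_neg (by omega),
        Matrix.one_apply_ne (show i ≠ j by intro h; rw [h] at hj; omega)]
      by_cases hi : 0 < (i : ℕ)
      · rw [dif_pos hi, if_neg (show ¬ (j : ℕ) ≤ (i : ℕ) - 1 by omega), mul_zero, sub_zero,
          sub_self]
      · rw [dif_neg hi, sub_zero, sub_self]
end

section
/- For the backward Euler eigenvalues λ_j = 1/(1+τ_j σ), μ_k = 1/(1+τ̃_k σ) with σ > 0, τ_j > 0, τ̃_k = Σ_{j=(k−1)m+1}^{km} τ_j, the entries of the Hermitian tridiagonal matrix (18) simplify to ζ_ε = [π_{ε−1} π_ε (1+τ̃_ε σ) π̃_ε]², ρ_ς = π_{ς−1} π_ς³ (1+τ̃_ς σ) π̃_ς², and θ_ς = π_ς⁴ π̃_ς², where π_ς = ∏_{j=(ς−1)m+1}^{ςm} (1+τ_j σ) and π̃_ς = 1/(1+τ̃_ς σ − π_ς). -/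
lemma weierstrass_weak (s : Finset ℕ) (b : ℕ → ℝ) (hb : ∀ j ∈ s, 0 ≤ b j) :
    1 + ∑ j ∈ s, b j ≤ ∏ j ∈ s, (1 + b j) := by
  classical
  induction s using Finset.induction_on with
  | empty => simp
  | insert _ _ hni ih =>
    rename_i i t
    rw [Finset.sum_insert hni, Finset.prod_insert hni]
    have h1 : 0 ≤ b i := hb i (Finset.mem_insert_self i t)
    have h2 : ∀ j ∈ t, 0 ≤ b j := fun j hj => hb j (Finset.mem_insert_of_mem hj)
    have h3 := ih h2
    have h4 : 0 ≤ ∑ j ∈ t, b j := Finset.sum_nonneg h2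
    nlinarith

lemma weierstrass_strict (s : Finset ℕ) (b : ℕ → ℝ) (hb : ∀ j ∈ s, 0 < b j)
    (hc : 2 ≤ s.card) : 1 + ∑ j ∈ s, b j < ∏ j ∈ s, (1 + b j) := by
  classical
  obtain ⟨i, hi⟩ := Finset.card_pos.mp (by omega : 0 < s.card)
  obtain ⟨t, hit, rfl⟩ : ∃ t, i ∉ t ∧ insert i t = s :=
    ⟨s.erase i, Finset.notMem_erase i s, Finset.insert_erase hi⟩
  rw [Finset.sum_insert hit, Finset.prod_insert hit]
  have hbi := hb i (Finset.mem_insert_self i t)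
  have hbt : ∀ j ∈ t, 0 < b j := fun j hj => hb j (Finset.mem_insert_of_mem hj)
  have ht : t.Nonempty := by
    rw [← Finset.card_pos]
    have := Finset.card_insert_of_notMem hit
    omega
  have h3 := weierstrass_weak t b (fun j hj => (hbt j hj).le)
  have h4 : 0 < ∑ j ∈ t, b j := Finset.sum_pos hbt ht
  nlinarith

lemma alg18_1 (A1 A B : ℝ) (hA1 : A1 ≠ 0) (hA : A ≠ 0) (hB : B ≠ 0) (hBA : B - A ≠ 0) :
    1 / ((A1⁻¹) ^ 2 * (A⁻¹ - B⁻¹) ^ 2) = (A1 * A * B * (B - A)⁻¹) ^ 2 := by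
  have h : A⁻¹ - B⁻¹ = (B - A) / (A * B) := by field_simp
  rw [h]; field_simp

lemma alg18_2 (A1 A B : ℝ) (hA1 : A1 ≠ 0) (hA : A ≠ 0) (hB : B ≠ 0) (hBA : B - A ≠ 0) :
    B⁻¹ / (A⁻¹ * A1⁻¹ * (A⁻¹ - B⁻¹) ^ 2) = A1 * A ^ 3 * B * ((B - A)⁻¹) ^ 2 := by
  have h : A⁻¹ - B⁻¹ = (B - A) / (A * B) := by field_simp
  rw [h]; field_simp

lemma alg18_3 (A B : ℝ) (hA : A ≠ 0) (hB : B ≠ 0) (hBA : B - A ≠ 0) :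
    (B⁻¹) ^ 2 / ((A⁻¹) ^ 2 * (A⁻¹ - B⁻¹) ^ 2) = A ^ 4 * ((B - A)⁻¹) ^ 2 := by
  have h : A⁻¹ - B⁻¹ = (B - A) / (A * B) := by field_simp
  rw [h]; field_simp

/-- `Λ_ς = ∏_{j=(ς-1)m+1}^{ςm} (1+τ_j σ)⁻¹`, the product of backward Euler eigenvalues. -/
noncomputable def Lam18 (τ : ℕ → ℝ) (σ : ℝ) (m ς : ℕ) : ℝ :=
  ∏ j ∈ Finset.Icc ((ς - 1) * m + 1) (ς * m), (1 + τ j * σ)⁻¹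

/-- `π_ς = ∏_{j=(ς-1)m+1}^{ςm} (1+τ_j σ)`. -/
noncomputable def pi18 (τ : ℕ → ℝ) (σ : ℝ) (m ς : ℕ) : ℝ :=
  ∏ j ∈ Finset.Icc ((ς - 1) * m + 1) (ς * m), (1 + τ j * σ)

/-- `τ̃_k = Σ_{j=(k-1)m+1}^{km} τ_j`. -/
noncomputable def tcoarse18 (τ : ℕ → ℝ) (m k : ℕ) : ℝ :=
  ∑ j ∈ Finset.Icc ((k - 1) * m + 1) (k * m), τ j

/-- `μ_k = (1 + τ̃_k σ)⁻¹`. -/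
noncomputable def mu18 (τ : ℕ → ℝ) (σ : ℝ) (m k : ℕ) : ℝ :=
  (1 + tcoarse18 τ m k * σ)⁻¹

/-- `π̃_ς = (1 + τ̃_ς σ - π_ς)⁻¹`. -/
noncomputable def pitilde18 (τ : ℕ → ℝ) (σ : ℝ) (m ς : ℕ) : ℝ :=
  (1 + tcoarse18 τ m ς * σ - pi18 τ σ m ς)⁻¹

lemma Lam18_eq_inv (τ : ℕ → ℝ) (σ : ℝ) (m ς : ℕ) :
    Lam18 τ σ m ς = (pi18 τ σ m ς)⁻¹ := by
  simp [Lam18, pi18]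

/-- For backward Euler eigenvalues, the entries of the Hermitian tridiagonal matrix (18)
simplify to `ζ_ε = [π_{ε-1} π_ε (1+τ̃_ε σ) π̃_ε]²`,
`ρ_ς = π_{ς-1} π_ς³ (1+τ̃_ς σ) π̃_ς²` and `θ_ς = π_ς⁴ π̃_ς²`. -/
theorem stmt18 (σ : ℝ) (hσ : 0 < σ) (N m Nc : ℕ) (hm : 2 ≤ m) (hN : N = m * Nc)
    (τ : ℕ → ℝ) (hτ : ∀ j, 1 ≤ j → j ≤ N → 0 < τ j) :
    (∀ ε, 2 ≤ ε → ε ≤ Nc →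
      1 / (Lam18 τ σ m (ε - 1) ^ 2 * (Lam18 τ σ m ε - mu18 τ σ m ε) ^ 2) =
        (pi18 τ σ m (ε - 1) * pi18 τ σ m ε * (1 + tcoarse18 τ m ε * σ) *
          pitilde18 τ σ m ε) ^ 2) ∧
    (∀ ς, 2 ≤ ς → ς ≤ Nc - 1 →
      mu18 τ σ m ς /
          (Lam18 τ σ m ς * Lam18 τ σ m (ς - 1) * (Lam18 τ σ m ς - mu18 τ σ m ς) ^ 2) =
        pi18 τ σ m (ς - 1) * pi18 τ σ m ς ^ 3 * (1 + tcoarse18 τ m ς * σ) *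
          pitilde18 τ σ m ς ^ 2) ∧
    (∀ ς, 2 ≤ ς → ς ≤ Nc - 1 →
      mu18 τ σ m ς ^ 2 / (Lam18 τ σ m ς ^ 2 * (Lam18 τ σ m ς - mu18 τ σ m ς) ^ 2) =
        pi18 τ σ m ς ^ 4 * pitilde18 τ σ m ς ^ 2) := by
  -- key facts for every coarse index in range
  have key : ∀ ς, 1 ≤ ς → ς ≤ Nc →
      0 < pi18 τ σ m ς ∧ 0 < 1 + tcoarse18 τ m ς * σ ∧
        (1 + tcoarse18 τ m ς * σ) - pi18 τ σ m ς < 0 := by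
    intro ς h1 h2
    set s := Finset.Icc ((ς - 1) * m + 1) (ς * m) with hs
    have hmem : ∀ j ∈ s, 0 < τ j * σ := by
      intro j hj
      rw [hs, Finset.mem_Icc] at hj
      have hj2 : j ≤ N := by
        have : ς * m ≤ Nc * m := Nat.mul_le_mul_right m h2
        have hNm : N = Nc * m := by rw [hN, Nat.mul_comm]
        omega
      exact mul_pos (hτ j (by omega) hj2) hσ
    have hcard : 2 ≤ s.card := by
      rw [hs, Nat.card_Icc]
      have h5 : (ς - 1) * m = ς * m - m := Nat.sub_one_mul ς m
      have h6 : m ≤ ς * m := Nat.le_mul_of_pos_left m (by omega)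
      omega
    have hst := weierstrass_strict s (fun j => τ j * σ) hmem hcard
    have hsum : tcoarse18 τ m ς * σ = ∑ j ∈ s, τ j * σ := by
      rw [tcoarse18, Finset.sum_mul]
    have hsnn : 0 ≤ ∑ j ∈ s, τ j * σ :=
      Finset.sum_nonneg fun j hj => (hmem j hj).le
    have hpi : pi18 τ σ m ς = ∏ j ∈ s, (1 + τ j * σ) := rfl
    constructor
    · rw [hpi]; linarith
    constructor
    · rw [hsum]; linarith
    · rw [hpi, hsum]; linarith
  refine ⟨?_, ?_, ?_⟩
  · intro ε h2 hNc
    obtain ⟨hA1, _, _⟩ := key (ε - 1) (by omega) (by omega)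
    obtain ⟨hA, hB, hBA⟩ := key ε (by omega) hNc
    rw [Lam18_eq_inv, Lam18_eq_inv, mu18, pitilde18]
    exact alg18_1 _ _ _ hA1.ne' hA.ne' hB.ne' (by linarith)
  · intro ς h2 hNc
    obtain ⟨hA1, _, _⟩ := key (ς - 1) (by omega) (by omega)
    obtain ⟨hA, hB, hBA⟩ := key ς (by omega) (by omega)
    rw [Lam18_eq_inv, Lam18_eq_inv, mu18, pitilde18]
    exact alg18_2 _ _ _ hA1.ne' hA.ne' hB.ne' (by linarith)
  · intro ς h2 hNc
    obtain ⟨hA, hB, hBA⟩ := key ς (by omega) (by omega)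
    rw [Lam18_eq_inv, mu18, pitilde18]
    exact alg18_3 _ _ hA.ne' hB.ne' (by linarith)
end
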